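/- arXiv:2005.08480 — 2 statements merged into one kernel-verified Lean document; each statement's English description precedes it below -/
import Mathlib

section
/- Under the noise-free click model with independent observation propensities p(x) ∈ (0,1], the expected IPS pairwise loss E_o[ Σ_{x_i : c(x_i)=1} (1/p(x_i)) Σ_{x_j : c(x_j)=0} δ(x_i, x_j) ] equals Σ_{x_i : r(x_i)=1} ( Σ_{x_j : r(x_j)=0} δ(x_i, x_j) + Σ_{x_j : r(x_j)=1} (1 − p(x_j)) δ(x_i, x_j) ), where the second inner sum ranges over relevant x_j ≠ x_i. -/
/-!
By linearity of expectation the loss is a sum over pairs `(i, j)` of `δ i j / p i` times the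
probability that `i` is clicked and `j` is not. That probability vanishes unless `r i`; it is
`p i` when `¬ r j`, and `p i * (1 - p j)` by independence when `r j` and `j ≠ i`. The diagonal
pairs contribute nothing because `δ i i = 0`, and the factor `1 / p i` cancels `p i`.
-/

open MeasureTheory ProbabilityTheory Finset

lemma sum_ite_mul_sum_ite_eq_sum_sum_indicator {X Ω : Type*} [Fintype X] (c : X → Ω → Bool)
    (w : X → ℝ) (δ : X → X → ℝ) (ω : Ω) :
    (∑ i, if c i ω = true then w i * ∑ j, (if c j ω = false then δ i j else 0) else 0) =
      ∑ i, ∑ j,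
        ({ω | c i ω = true} ∩ {ω | c j ω = false}).indicator (fun _ => w i * δ i j) ω := by
  refine sum_congr rfl fun i _ => ?_
  by_cases hi : c i ω = true
  · simp [hi, mul_sum, Set.indicator_apply, mul_ite]
  · simp [hi]

section

variable {Ω : Type*} [MeasurableSpace Ω] {μ : Measure Ω}

lemma ProbabilityTheory.IndepFun.measureReal_eq_true_inter_eq_false [IsProbabilityMeasure μ]
    {f g : Ω → Bool} (hg : Measurable g) (hfg : IndepFun f g μ) :
    μ.real ({ω | f ω = true} ∩ {ω | g ω = false}) =
      μ.real {ω | f ω = true} * (1 - μ.real {ω | g ω = true}) := by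
  have hcompl : {ω | g ω = false} = {ω | g ω = true}ᶜ := by ext; simp
  have hprod : μ.real ({ω | f ω = true} ∩ {ω | g ω = false}) =
      μ.real {ω | f ω = true} * μ.real {ω | g ω = false} := by
    simp only [Measure.real, ← ENNReal.toReal_mul]
    exact congrArg ENNReal.toReal (hfg.measure_inter_preimage_eq_mul {true} {false}
      (measurableSet_singleton _) (measurableSet_singleton _))
  rw [hprod, hcompl,
    probReal_compl_eq_one_sub (s := {ω | g ω = true}) (hg (measurableSet_singleton true))]

lemma integral_sum_sum_indicator_const [IsFiniteMeasure μ] {ι κ : Type*} (s : Finset ι)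
    (t : Finset κ) {A : ι → κ → Set Ω} (hA : ∀ i j, MeasurableSet (A i j))
    (a : ι → κ → ℝ) :
    ∫ ω, ∑ i ∈ s, ∑ j ∈ t, (A i j).indicator (fun _ => a i j) ω ∂μ =
      ∑ i ∈ s, ∑ j ∈ t, μ.real (A i j) * a i j := by
  have hint : ∀ i j, Integrable ((A i j).indicator fun _ => a i j) μ :=
    fun i j => (integrable_const _).indicator (hA i j)
  rw [integral_finsetSum _ fun i _ => integrable_finsetSum _ fun j _ => hint i j]
  refine sum_congr rfl fun i _ => ?_
  rw [integral_finsetSum _ fun j _ => hint i j]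
  exact sum_congr rfl fun j _ => integral_indicator_const _ (hA i j)

lemma measureReal_click_inter_no_click {X : Type*} [IsProbabilityMeasure μ] {o : X → Ω → Bool}
    (hmeas : ∀ x, Measurable (o x)) (hind : iIndepFun o μ) (r : X → Bool) {i j : X}
    (hij : i ≠ j) :
    μ.real ({ω | (o i ω && r i) = true} ∩ {ω | (o j ω && r j) = false}) =
      if r i then
        μ.real {ω | o i ω = true} * (if r j then 1 - μ.real {ω | o j ω = true} else 1)
      else 0 := by
  have hindep := (hind.indepFun hij).measureReal_eq_true_inter_eq_false (hmeas j)
  cases r i <;> cases r j <;> simp [hindep]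

lemma integral_pairwise_click_loss {X : Type*} [Fintype X] [IsFiniteMeasure μ]
    {c : X → Ω → Bool} (hc : ∀ x, Measurable (c x)) (w : X → ℝ) (δ : X → X → ℝ) :
    ∫ ω, (∑ i, if c i ω = true then w i * ∑ j, (if c j ω = false then δ i j else 0) else 0)
      ∂μ =
      ∑ i, ∑ j, μ.real ({ω | c i ω = true} ∩ {ω | c j ω = false}) * (w i * δ i j) := by
  simp_rw [sum_ite_mul_sum_ite_eq_sum_sum_indicator]
  exact integral_sum_sum_indicator_const _ _
    (fun i j => (hc i (measurableSet_singleton _)).inter (hc j (measurableSet_singleton _))) _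

end

/-- Expected IPS pairwise loss. Under the noise-free click model
with independent observations,
E_o[Σ_{c(xᵢ)=1} (1/p(xᵢ)) Σ_{c(xⱼ)=0} δ(xᵢ,xⱼ)]
  = Σ_{r(xᵢ)=1} (Σ_{r(xⱼ)=0} δ(xᵢ,xⱼ) + Σ_{r(xⱼ)=1, xⱼ≠xᵢ} (1−p(xⱼ))·δ(xᵢ,xⱼ)). -/
theorem ips_pairwise_expected_loss {X Ω : Type*} [Fintype X] [DecidableEq X]
    [MeasurableSpace Ω] (μ : Measure Ω) [IsProbabilityMeasure μ]
    (o : X → Ω → Bool) (r : X → Bool) (p : X → ℝ) (δ : X → X → ℝ)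
    (hmeas : ∀ x, Measurable (o x))
    (hind : iIndepFun o μ)
    (hp : ∀ x, 0 < p x ∧ p x ≤ 1)
    (hprob : ∀ x, (μ {ω | o x ω = true}).toReal = p x)
    (hδdiag : ∀ x, δ x x = 0) :
    ∫ ω, (∑ x_i, if (o x_i ω && r x_i) = true then
        (1 / p x_i) * ∑ x_j, (if (o x_j ω && r x_j) = false then δ x_i x_j else 0)
      else 0) ∂μ
    = ∑ x_i, (if r x_i = true then
        (∑ x_j, if r x_j = false then δ x_i x_j else 0)
        + (∑ x_j ∈ Finset.univ.filter (fun x_j => r x_j = true ∧ x_j ≠ x_i),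
            (1 - p x_j) * δ x_i x_j)
      else 0) := by
  have hclick : ∀ x, Measurable fun ω => o x ω && r x :=
    fun x => (measurable_of_finite fun b => b && r x).comp (hmeas x)
  have pair : ∀ i j, μ.real ({ω | (o i ω && r i) = true} ∩ {ω | (o j ω && r j) = false}) *
      (1 / p i * δ i j) =
        if r i then
          (if r j = false then δ i j else 0) +
            (if r j = true ∧ j ≠ i then (1 - p j) * δ i j else 0)
        else 0 := by
    intro i j
    obtain rfl | hij := eq_or_ne i j
    · simp [hδdiag]
    rw [measureReal_click_inter_no_click hmeas hind r hij]
    have hpi := (hp i).1.ne'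
    cases r i <;> cases r j <;> simp [Measure.real, hprob, hij.symm] <;> field_simp
  rw [integral_pairwise_click_loss (c := fun x ω => o x ω && r x) hclick]
  refine sum_congr rfl fun i _ => ?_
  simp only [pair, sum_filter]
  split_ifs <;> simp [sum_add_distrib]
end

section
/- Under the noisy click model where P(c(x)=1 | o(x)=1, r(x)=1) = ε₊, P(c(x)=1 | o(x)=1, r(x)=0) = ε₋ with 1 ≥ ε₊ > ε₋ ≥ 0, and clicks require observation (P(c(x)=1 | o(x)=0) = 0), the expected IPS-weighted value E[c(x)·v/p(x)] for a document x with r(x)=1 equals ε₊·v, and for r(x)=0 equals ε₋·v, where p(x)=P(o(x)=1) > 0 and v is any constant. Hence the expected IPS-weighted contribution of a relevant document strictly exceeds that of an irrelevant one whenever v > 0. -/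
/-! Since clicks require observation, `{c = 1}` and `{c = 1, o = 1}` differ by a null set, so
`E[c · v / p] = (v / p) · P(c = 1, o = 1) = (v / p) · ε · p = ε · v`. -/

open MeasureTheory

section

variable {Ω : Type*} [MeasurableSpace Ω] {μ : Measure Ω}

lemma measure_inter_true_eq_of_measure_inter_false_eq_zero {s : Set Ω} {o : Ω → Bool}
    (h : μ (s ∩ {ω | o ω = false}) = 0) : μ (s ∩ {ω | o ω = true}) = μ s :=
  measure_inter_conull' <| by
    simpa only [Set.sdiff_eq, Set.compl_ofPred, Bool.not_eq_true] using h

lemma integral_ite_bool_const {c : Ω → Bool} (hc : Measurable c) (a : ℝ) :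
    ∫ ω, (if c ω = true then a else 0) ∂μ = μ.real {ω | c ω = true} * a := by
  have hs : MeasurableSet {ω | c ω = true} := hc (measurableSet_singleton true)
  rw [← smul_eq_mul, ← integral_indicator_const a hs]
  simp only [Set.indicator_apply, Set.mem_ofPred_eq]

lemma integral_ips_weight_eq {c o : Ω → Bool} (hc : Measurable c) {p ε : ℝ} (hp : p ≠ 0)
    (v : ℝ) (hno : μ ({ω | c ω = true} ∩ {ω | o ω = false}) = 0)
    (hclick : (μ ({ω | c ω = true} ∩ {ω | o ω = true})).toReal = ε * p) :
    ∫ ω, (if c ω = true then v / p else 0) ∂μ = ε * v := by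
  rw [integral_ite_bool_const hc, measureReal_def,
    ← measure_inter_true_eq_of_measure_inter_false_eq_zero hno, hclick]
  field_simp

end

theorem noisy_click_expected_ips_contribution_general {X Ω : Type*}
    [MeasurableSpace Ω] (μ : Measure Ω)
    (o c : X → Ω → Bool) (r : X → Bool) (p : X → ℝ) (εp εm v : ℝ)
    (hε : 0 ≤ εm ∧ εm < εp ∧ εp ≤ 1)
    (hmeas : ∀ x, Measurable (c x))
    (hp : ∀ x, 0 < p x ∧ p x ≤ 1)
    -- clicks require observation: P(c(x)=1 ∧ o(x)=0) = 0
    (hno : ∀ x, μ ({ω | c x ω = true} ∩ {ω | o x ω = false}) = 0)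
    -- P(c(x)=1 ∧ o(x)=1) = ε₊ · P(o(x)=1) for relevant x
    (hcr : ∀ x, r x = true →
      (μ ({ω | c x ω = true} ∩ {ω | o x ω = true})).toReal = εp * p x)
    -- P(c(x)=1 ∧ o(x)=1) = ε₋ · P(o(x)=1) for irrelevant x
    (hci : ∀ x, r x = false →
      (μ ({ω | c x ω = true} ∩ {ω | o x ω = true})).toReal = εm * p x) :
    (∀ x, r x = true →
        ∫ ω, (if c x ω = true then v / p x else 0) ∂μ = εp * v)
    ∧ (∀ x, r x = false →
        ∫ ω, (if c x ω = true then v / p x else 0) ∂μ = εm * v)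
    ∧ (0 < v → εm * v < εp * v) :=
  ⟨fun x hx => integral_ips_weight_eq (hmeas x) (hp x).1.ne' v (hno x) (hcr x hx),
    fun x hx => integral_ips_weight_eq (hmeas x) (hp x).1.ne' v (hno x) (hci x hx),
    fun hv => mul_lt_mul_of_pos_right hε.2.1 hv⟩

open MeasureTheory in
/-- Noisy click model: clicks require observation, and upon
observation a relevant document is clicked with probability ε₊ and an
irrelevant one with probability ε₋, 1 ≥ ε₊ > ε₋ ≥ 0. Then the expected
IPS-weighted value E[c(x)·v/p(x)] equals ε₊·v for a relevant document and
ε₋·v for an irrelevant one; in particular the former strictly exceeds the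
latter whenever v > 0. -/
theorem noisy_click_expected_ips_contribution {X Ω : Type*}
    [MeasurableSpace Ω] (μ : Measure Ω) [IsProbabilityMeasure μ]
    (o c : X → Ω → Bool) (r : X → Bool) (p : X → ℝ) (εp εm v : ℝ)
    (hε : 0 ≤ εm ∧ εm < εp ∧ εp ≤ 1)
    (hmeas : ∀ x, Measurable (c x))
    (hp : ∀ x, 0 < p x ∧ p x ≤ 1)
    (hprob : ∀ x, (μ {ω | o x ω = true}).toReal = p x)
    -- clicks require observation: P(c(x)=1 ∧ o(x)=0) = 0
    (hno : ∀ x, μ ({ω | c x ω = true} ∩ {ω | o x ω = false}) = 0)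
    -- P(c(x)=1 ∧ o(x)=1) = ε₊ · P(o(x)=1) for relevant x
    (hcr : ∀ x, r x = true →
      (μ ({ω | c x ω = true} ∩ {ω | o x ω = true})).toReal = εp * p x)
    -- P(c(x)=1 ∧ o(x)=1) = ε₋ · P(o(x)=1) for irrelevant x
    (hci : ∀ x, r x = false →
      (μ ({ω | c x ω = true} ∩ {ω | o x ω = true})).toReal = εm * p x) :
    (∀ x, r x = true →
        ∫ ω, (if c x ω = true then v / p x else 0) ∂μ = εp * v)
    ∧ (∀ x, r x = false →
        ∫ ω, (if c x ω = true then v / p x else 0) ∂μ = εm * v)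
    ∧ (0 < v → εm * v < εp * v) :=
  noisy_click_expected_ips_contribution_general μ o c r p εp εm v hε hmeas hp hno hcr hci
end
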